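/- arXiv:2408.10612 — 3 statements merged into one kernel-verified Lean document; each statement's English description precedes it below -/
import Mathlib

section
/- For every q ≥ 1, the function D_q is a metric on the set F of distribution functions on ℝ: it is nonnegative and finite, vanishes exactly when F = G, is symmetric, and satisfies the triangle inequality. -/
/-!
Every `r_{F,G}(v)` lies in `[0, 1]`, is symmetric in `F, G`, and `r_{F,F}(v) = 1`. The triangle
inequality comes from the pointwise bound `min a c + min c b ≤ c + min a b` applied to the
increments of `F`, `H`, `G` over the same cells of `v`: the increments of `H` sum to `1`, so
`r_{F,H}(v) + r_{H,G}(v) ≤ 1 + r_{F,G}(v)`. If `F x ≠ G x`, the constant `v ≡ x` gives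
`r_{F,G}(v) = min (F x) (G x) + min (1 - F x) (1 - G x) < 1`, hence `D_q(F, G) > 0`.
-/

open Filter Set

/-- A distribution function on ℝ: nondecreasing, right-continuous,
with limit 0 at -∞ and limit 1 at ∞. -/
def IsDistFun (F : ℝ → ℝ) : Prop :=
  Monotone F ∧ (∀ x, ContinuousWithinAt F (Set.Ici x) x) ∧
  Tendsto F atBot (nhds 0) ∧ Tendsto F atTop (nhds 1)

/-- Extended evaluation: index 0 ↦ F(-∞)=0, index q+1 ↦ F(∞)=1,
indices 1..q ↦ F(vᵢ). -/
noncomputable def dext (q : ℕ) (F : ℝ → ℝ) (v : ℕ → ℝ) : ℕ → ℝ := fun i =>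
  if i = 0 then 0 else if i = q + 1 then 1 else F (v i)

/-- r_{F,G}(v) = Σ_{i=0}^{q} min{F|_{vᵢ}^{vᵢ₊₁}, G|_{vᵢ}^{vᵢ₊₁}}. -/
noncomputable def rFG (q : ℕ) (F G : ℝ → ℝ) (v : ℕ → ℝ) : ℝ :=
  ∑ i ∈ Finset.range (q + 1),
    min (dext q F v (i + 1) - dext q F v i) (dext q G v (i + 1) - dext q G v i)

/-- The statistic D_q(F, G) = 1 - inf over nondecreasing v ∈ ℝ^q of r_{F,G}(v). -/
noncomputable def Dq (q : ℕ) (F G : ℝ → ℝ) : ℝ :=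
  1 - sInf {r | ∃ v : ℕ → ℝ, MonotoneOn v (Set.Icc 1 q) ∧ r = rFG q F G v}

namespace IsDistFun

variable {F : ℝ → ℝ}

lemma nonneg (hF : IsDistFun F) (x : ℝ) : 0 ≤ F x :=
  le_of_tendsto hF.2.2.1 ((eventually_le_atBot x).mono fun _ hy => hF.1 hy)

lemma le_one (hF : IsDistFun F) (x : ℝ) : F x ≤ 1 :=
  ge_of_tendsto hF.2.2.2 ((eventually_ge_atTop x).mono fun _ hy => hF.1 hy)

end IsDistFun

section rFG

variable {q : ℕ} {F G : ℝ → ℝ} {v : ℕ → ℝ}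

lemma dext_le_dext_succ (hF : IsDistFun F) (hv : MonotoneOn v (Icc 1 q)) {i : ℕ}
    (hi : i ≤ q) : dext q F v i ≤ dext q F v (i + 1) := by
  simp only [dext, Nat.add_one_ne_zero, if_false, add_left_inj]
  split_ifs <;> first
    | omega
    | linarith [hF.nonneg (v (i + 1)), hF.le_one (v i)]
    | exact hF.1 (hv ⟨by omega, by omega⟩ ⟨by omega, by omega⟩ (by omega))

lemma sum_dext_sub (q : ℕ) (F : ℝ → ℝ) (v : ℕ → ℝ) :
    ∑ i ∈ Finset.range (q + 1), (dext q F v (i + 1) - dext q F v i) = 1 := by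
  rw [Finset.sum_range_sub (dext q F v)]
  simp [dext]

lemma rFG_nonneg (hF : IsDistFun F) (hG : IsDistFun G) (hv : MonotoneOn v (Icc 1 q)) :
    0 ≤ rFG q F G v :=
  Finset.sum_nonneg fun i hi => by
    have hi : i ≤ q := Nat.lt_succ_iff.mp (Finset.mem_range.mp hi)
    exact le_min (sub_nonneg.mpr (dext_le_dext_succ hF hv hi))
      (sub_nonneg.mpr (dext_le_dext_succ hG hv hi))

lemma rFG_le_one (q : ℕ) (F G : ℝ → ℝ) (v : ℕ → ℝ) : rFG q F G v ≤ 1 :=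
  (Finset.sum_le_sum fun _ _ => min_le_left _ _).trans (sum_dext_sub q F v).le

lemma rFG_self (q : ℕ) (F : ℝ → ℝ) (v : ℕ → ℝ) : rFG q F F v = 1 := by
  simp only [rFG, min_self, sum_dext_sub]

lemma rFG_comm (q : ℕ) (F G : ℝ → ℝ) (v : ℕ → ℝ) : rFG q F G v = rFG q G F v := by
  simp only [rFG, min_comm]

lemma rFG_const (hq : 1 ≤ q) (F G : ℝ → ℝ) (x : ℝ) :
    rFG q F G (fun _ => x) = min (F x) (G x) + min (1 - F x) (1 - G x) := by
  obtain ⟨n, rfl⟩ := Nat.exists_eq_add_of_le' hq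
  rw [rFG, Finset.sum_range_succ, Finset.sum_range_succ', Finset.sum_eq_zero]
  · simp [dext]
  · intro i hi
    have hin : i < n := Finset.mem_range.mp hi
    simp [dext, hin.ne, (hin.trans n.lt_succ_self).ne]

lemma min_add_min_le_add_min (a b c : ℝ) : min a c + min c b ≤ c + min a b := by
  simp only [min_def]
  split_ifs <;> linarith

lemma rFG_add_rFG_le (q : ℕ) (F G H : ℝ → ℝ) (v : ℕ → ℝ) :
    rFG q F H v + rFG q H G v ≤ 1 + rFG q F G v := by
  rw [rFG, rFG, rFG, ← Finset.sum_add_distrib, ← sum_dext_sub q H v, ← Finset.sum_add_distrib]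
  exact Finset.sum_le_sum fun _ _ => min_add_min_le_add_min _ _ _

end rFG

def rFGValues (q : ℕ) (F G : ℝ → ℝ) : Set ℝ :=
  {r | ∃ v : ℕ → ℝ, MonotoneOn v (Icc 1 q) ∧ r = rFG q F G v}

section rFGValues

variable {q : ℕ} {F G : ℝ → ℝ}

lemma Dq_eq_one_sub_sInf (q : ℕ) (F G : ℝ → ℝ) : Dq q F G = 1 - sInf (rFGValues q F G) := rfl

lemma rFG_mem_rFGValues {v : ℕ → ℝ} (hv : MonotoneOn v (Icc 1 q)) :
    rFG q F G v ∈ rFGValues q F G :=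
  ⟨v, hv, rfl⟩

lemma rFGValues_nonempty (q : ℕ) (F G : ℝ → ℝ) : (rFGValues q F G).Nonempty :=
  ⟨_, rFG_mem_rFGValues (monotoneOn_const (c := (0 : ℝ)))⟩

lemma bddBelow_rFGValues (hF : IsDistFun F) (hG : IsDistFun G) : BddBelow (rFGValues q F G) :=
  ⟨0, fun _ ⟨_, hv, hr⟩ => hr ▸ rFG_nonneg hF hG hv⟩

lemma sInf_rFGValues_le (hF : IsDistFun F) (hG : IsDistFun G) {v : ℕ → ℝ}
    (hv : MonotoneOn v (Icc 1 q)) : sInf (rFGValues q F G) ≤ rFG q F G v :=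
  csInf_le (bddBelow_rFGValues hF hG) (rFG_mem_rFGValues hv)

lemma rFGValues_self (q : ℕ) (F : ℝ → ℝ) : rFGValues q F F = {1} := by
  refine (rFGValues_nonempty q F F).subset_singleton_iff.mp ?_
  rintro _ ⟨v, -, rfl⟩
  exact rFG_self q F v

lemma rFGValues_comm (q : ℕ) (F G : ℝ → ℝ) : rFGValues q F G = rFGValues q G F := by
  simp only [rFGValues, rFG_comm q F G]

end rFGValues

section Dq

variable {q : ℕ} {F G H : ℝ → ℝ}

lemma Dq_nonneg (hF : IsDistFun F) (hG : IsDistFun G) : 0 ≤ Dq q F G := by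
  rw [Dq_eq_one_sub_sInf, sub_nonneg]
  exact (sInf_rFGValues_le hF hG (monotoneOn_const (c := (0 : ℝ)))).trans (rFG_le_one q F G _)

lemma Dq_self (q : ℕ) (F : ℝ → ℝ) : Dq q F F = 0 := by
  rw [Dq_eq_one_sub_sInf, rFGValues_self, csInf_singleton, sub_self]

lemma Dq_comm (q : ℕ) (F G : ℝ → ℝ) : Dq q F G = Dq q G F := by
  rw [Dq_eq_one_sub_sInf, Dq_eq_one_sub_sInf, rFGValues_comm]

lemma min_add_min_one_sub_lt_one {a b : ℝ} (hab : a ≠ b) : min a b + min (1 - a) (1 - b) < 1 := by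
  rcases hab.lt_or_gt with h | h
  · rw [min_eq_left h.le, min_eq_right (by linarith)]; linarith
  · rw [min_eq_right h.le, min_eq_left (by linarith)]; linarith

lemma eq_of_Dq_eq_zero (hq : 1 ≤ q) (hF : IsDistFun F) (hG : IsDistFun G) (h : Dq q F G = 0) :
    F = G := by
  by_contra hne
  obtain ⟨x, hx⟩ := Function.ne_iff.mp hne
  have hle := sInf_rFGValues_le hF hG (monotoneOn_const (c := x) (s := Icc 1 q))
  rw [rFG_const hq] at hle
  rw [Dq_eq_one_sub_sInf] at h
  linarith [min_add_min_one_sub_lt_one hx]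

lemma Dq_triangle (hF : IsDistFun F) (hG : IsDistFun G) (hH : IsDistFun H) :
    Dq q F G ≤ Dq q F H + Dq q H G := by
  have hsInf : sInf (rFGValues q F H) + sInf (rFGValues q H G) - 1 ≤ sInf (rFGValues q F G) := by
    refine le_csInf (rFGValues_nonempty q F G) ?_
    rintro _ ⟨v, hv, rfl⟩
    linarith [sInf_rFGValues_le hF hH hv, sInf_rFGValues_le hH hG hv, rFG_add_rFG_le q F G H v]
  simp only [Dq_eq_one_sub_sInf]
  linarith

end Dq

/-- For each q ≥ 1, D_q is a metric on the set of distribution functions: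
nonnegative (and finite, being real-valued), vanishing exactly when F = G,
symmetric, and satisfying the triangle inequality. -/
theorem Dq_is_metric (q : ℕ) (hq : 1 ≤ q) :
    (∀ F G : ℝ → ℝ, IsDistFun F → IsDistFun G → 0 ≤ Dq q F G) ∧
    (∀ F G : ℝ → ℝ, IsDistFun F → IsDistFun G → (Dq q F G = 0 ↔ F = G)) ∧
    (∀ F G : ℝ → ℝ, IsDistFun F → IsDistFun G → Dq q F G = Dq q G F) ∧
    (∀ F G H : ℝ → ℝ, IsDistFun F → IsDistFun G → IsDistFun H →
      Dq q F G ≤ Dq q F H + Dq q H G) :=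
  ⟨fun _ _ hF hG => Dq_nonneg hF hG,
    fun F _ hF hG => ⟨eq_of_Dq_eq_zero hq hF hG, fun h => h ▸ Dq_self q F⟩,
    fun F G _ _ => Dq_comm q F G,
    fun _ _ _ hF hG hH => Dq_triangle hF hG hH⟩
end

section
/- For each positive integer q and all distribution functions F, G on ℝ, D_q(F, G) ≤ q · D₁(F, G), where D₁(F, G) equals the Kolmogorov–Smirnov distance sup_x |F(x) − G(x)|. -/
open Filter Set

lemma distFun_nonneg {F : ℝ → ℝ} (hF : IsDistFun F) (x : ℝ) : 0 ≤ F x := by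
  refine le_of_tendsto hF.2.2.1 ?_
  filter_upwards [eventually_le_atBot x] with y hy using hF.1 hy

lemma distFun_le_one {F : ℝ → ℝ} (hF : IsDistFun F) (x : ℝ) : F x ≤ 1 := by
  refine ge_of_tendsto hF.2.2.2 ?_
  filter_upwards [eventually_ge_atTop x] with y hy using hF.1 hy

lemma abs_FG_le_one {F G : ℝ → ℝ} (hF : IsDistFun F) (hG : IsDistFun G) (x : ℝ) :
    |F x - G x| ≤ 1 := by
  rw [abs_sub_le_iff]
  constructor <;> nlinarith [distFun_nonneg hF x, distFun_le_one hF x,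
    distFun_nonneg hG x, distFun_le_one hG x]

lemma bddAbove_FG {F G : ℝ → ℝ} (hF : IsDistFun F) (hG : IsDistFun G) :
    BddAbove (Set.range fun x => |F x - G x|) := by
  refine ⟨1, ?_⟩
  rintro r ⟨x, rfl⟩
  exact abs_FG_le_one hF hG x

lemma min_half (a b : ℝ) : min a b = (a + b - |a - b|) / 2 := by
  rcases le_total a b with h | h
  · rw [min_eq_left h, abs_of_nonpos (by linarith)]; ring
  · rw [min_eq_right h, abs_of_nonneg (by linarith)]; ring

lemma rFG_one (F G : ℝ → ℝ) (v : ℕ → ℝ) :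
    rFG 1 F G v = 1 - |F (v 1) - G (v 1)| := by
  have h : rFG 1 F G v = min (F (v 1)) (G (v 1)) + min (1 - F (v 1)) (1 - G (v 1)) := by
    simp [rFG, dext, Finset.sum_range_succ]
  rw [h, min_half, min_half]
  have h2 : |1 - F (v 1) - (1 - G (v 1))| = |F (v 1) - G (v 1)| := by
    rw [abs_sub_comm]; ring_nf
  rw [h2]; ring

lemma rFG_ge {q : ℕ} {F G : ℝ → ℝ} (hF : IsDistFun F) (hG : IsDistFun G)
    (v : ℕ → ℝ) : 1 - q * (⨆ x, |F x - G x|) ≤ rFG q F G v := by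
  set D := ⨆ x, |F x - G x| with hD
  set c : ℕ → ℝ := fun i => dext q F v i - dext q G v i with hc
  set g : ℕ → ℝ := fun i => if i = 0 ∨ i = q + 1 then (0:ℝ) else D with hg
  have hcg : ∀ i, |c i| ≤ g i := by
    intro i
    by_cases h0 : i = 0
    · simp [hc, hg, h0, dext]
    by_cases h1 : i = q + 1
    · simp [hc, hg, h0, h1, dext]
    · have hci : c i = F (v i) - G (v i) := by simp [hc, dext, h0, h1]
      have hgi : g i = D := by simp [hg, h0, h1]
      rw [hci, hgi]
      exact le_ciSup (bddAbove_FG hF hG) (v i)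
  have hFtel : ∑ i ∈ Finset.range (q+1), (dext q F v (i+1) - dext q F v i) = 1 := by
    rw [Finset.sum_range_sub (fun i => dext q F v i)]
    simp [dext]
  have hGtel : ∑ i ∈ Finset.range (q+1), (dext q G v (i+1) - dext q G v i) = 1 := by
    rw [Finset.sum_range_sub (fun i => dext q G v i)]
    simp [dext]
  have hr : rFG q F G v =
      1 - (∑ i ∈ Finset.range (q+1), |c (i+1) - c i|) / 2 := by
    unfold rFG
    have hterm : ∀ i ∈ Finset.range (q+1),
        min (dext q F v (i + 1) - dext q F v i) (dext q G v (i + 1) - dext q G v i)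
        = ((dext q F v (i+1) - dext q F v i) + (dext q G v (i+1) - dext q G v i)
            - |c (i+1) - c i|) / 2 := by
      intro i _
      rw [min_half]
      congr 3
      simp [hc]; ring
    rw [Finset.sum_congr rfl hterm, ← Finset.sum_div, Finset.sum_sub_distrib,
      Finset.sum_add_distrib, hFtel, hGtel]
    ring
  have hsub : Finset.Ico 1 (q+1) ⊆ Finset.range (q+1+1) := by
    intro i hi
    simp only [Finset.mem_Ico] at hi
    simp only [Finset.mem_range]
    omega
  have hzero : ∀ i ∈ Finset.range (q+1+1), i ∉ Finset.Ico 1 (q+1) → g i = 0 := by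
    intro i hi hni
    simp only [Finset.mem_range] at hi
    simp only [Finset.mem_Ico, not_and, not_lt] at hni
    have hio : i = 0 ∨ i = q + 1 := by omega
    rcases hio with h | h <;> simp [hg, h]
  have hcongr : ∀ i ∈ Finset.Ico 1 (q+1), g i = D := by
    intro i hi
    simp only [Finset.mem_Ico] at hi
    have h0 : i ≠ 0 := by omega
    have h1 : i ≠ q + 1 := by omega
    simp [hg, h0, h1]
  have hT : ∑ i ∈ Finset.range (q+1+1), g i = q * D := by
    rw [← Finset.sum_subset hsub hzero, Finset.sum_congr rfl hcongr,
      Finset.sum_const, Nat.card_Ico]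
    simp [nsmul_eq_mul]
  have h0 : g 0 = 0 := by simp [hg]
  have hq1 : g (q+1) = 0 := by simp [hg]
  have e1 : ∑ i ∈ Finset.range (q+1), g (i+1) = q * D := by
    have := Finset.sum_range_succ' g (q+1)
    rw [hT, h0] at this
    linarith
  have e2 : ∑ i ∈ Finset.range (q+1), g i = q * D := by
    have := Finset.sum_range_succ g (q+1)
    rw [hT, hq1] at this
    linarith
  have hsum : ∑ i ∈ Finset.range (q+1), |c (i+1) - c i| ≤ 2 * (q * D) := by
    have h1 : ∑ i ∈ Finset.range (q+1), |c (i+1) - c i|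
        ≤ ∑ i ∈ Finset.range (q+1), (g (i+1) + g i) :=
      Finset.sum_le_sum fun i _ => (abs_sub (c (i+1)) (c i)).trans
        (add_le_add (hcg _) (hcg _))
    rw [Finset.sum_add_distrib, e1, e2] at h1
    linarith
  rw [hr]
  linarith

lemma D1_eq {F G : ℝ → ℝ} (hF : IsDistFun F) (hG : IsDistFun G) :
    Dq 1 F G = ⨆ x, |F x - G x| := by
  set D := ⨆ x, |F x - G x| with hD
  have habs : ∀ x, |F x - G x| ≤ D := fun x => le_ciSup (bddAbove_FG hF hG) x
  have hset : {r | ∃ v : ℕ → ℝ, MonotoneOn v (Set.Icc 1 1) ∧ r = rFG 1 F G v}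
      = Set.range (fun t : ℝ => 1 - |F t - G t|) := by
    ext r
    constructor
    · rintro ⟨v, -, rfl⟩
      exact ⟨v 1, (rFG_one F G v).symm⟩
    · rintro ⟨t, rfl⟩
      exact ⟨fun _ => t, fun _ _ _ _ _ => le_rfl, (rFG_one F G fun _ => t).symm⟩
  rw [Dq, hset]
  have hbb : BddBelow (Set.range fun t : ℝ => 1 - |F t - G t|) := by
    refine ⟨0, ?_⟩
    rintro r ⟨t, rfl⟩
    simp only []
    linarith [abs_FG_le_one hF hG t]
  have h1 : sInf (Set.range fun t : ℝ => 1 - |F t - G t|) = 1 - D := by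
    apply le_antisymm
    · have h2 : D ≤ 1 - sInf (Set.range fun t : ℝ => 1 - |F t - G t|) := by
        apply ciSup_le
        intro x
        have h3 := csInf_le hbb ⟨x, rfl⟩
        simp only [] at h3
        linarith
      linarith
    · refine le_csInf ⟨1 - |F 0 - G 0|, ⟨0, rfl⟩⟩ ?_
      rintro b ⟨t, rfl⟩
      simp only []
      linarith [habs t]
  rw [h1]; ring

/-- D_q(F, G) ≤ q · D₁(F, G), where D₁ equals the KS distance sup_x |F x - G x|. -/
theorem Dq_le_q_mul_D1 (q : ℕ) (hq : 1 ≤ q) (F G : ℝ → ℝ)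
    (hF : IsDistFun F) (hG : IsDistFun G) :
    Dq q F G ≤ q * Dq 1 F G ∧ Dq 1 F G = ⨆ x : ℝ, |F x - G x| := by
  have hD1 := D1_eq hF hG
  refine ⟨?_, hD1⟩
  rw [hD1, Dq]
  have hle : 1 - q * (⨆ x, |F x - G x|) ≤
      sInf {r | ∃ v : ℕ → ℝ, MonotoneOn v (Set.Icc 1 q) ∧ r = rFG q F G v} := by
    refine le_csInf ⟨rFG q F G (fun _ => 0), ⟨fun _ => 0, fun _ _ _ _ _ => le_rfl, rfl⟩⟩ ?_
    rintro b ⟨v, -, rfl⟩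
    exact rFG_ge hF hG v
  linarith
end

section
/- For distribution functions F and G, define δ(x) = F(x) − G(x) and for v₁ ≤ v₂ set d(v₁,v₂) = |δ(v₁)| + |δ(v₂) − δ(v₁)| + |δ(v₂)|. Then sup_{v₁ ≤ v₂} d(v₁, v₂) = 2( sup_x δ(x) − inf_x δ(x) ). -/
open Filter Set

/-- With δ = F - G, sup_{v₁ ≤ v₂} (|δ(v₁)| + |δ(v₂) − δ(v₁)| + |δ(v₂)|)
= 2 (sup δ − inf δ). -/
theorem sup_d_eq (F G : ℝ → ℝ) (hF : IsDistFun F) (hG : IsDistFun G) :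
    sSup {s | ∃ v₁ v₂ : ℝ, v₁ ≤ v₂ ∧
        s = |F v₁ - G v₁| + |(F v₂ - G v₂) - (F v₁ - G v₁)| + |F v₂ - G v₂|}
      = 2 * ((⨆ x : ℝ, F x - G x) - ⨅ x : ℝ, F x - G x) := by
  obtain ⟨hFm, -, hF0, hF1⟩ := hF
  obtain ⟨hGm, -, hG0, hG1⟩ := hG
  set δ : ℝ → ℝ := fun x => F x - G x with hδdef
  have hδx : ∀ x, δ x = F x - G x := fun x => rfl
  have hδbot : Tendsto δ atBot (nhds 0) := by
    simpa using hF0.sub hG0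
  have hF01 : ∀ x, 0 ≤ F x ∧ F x ≤ 1 :=
    fun x => ⟨hFm.le_of_tendsto hF0 x, hFm.ge_of_tendsto hF1 x⟩
  have hG01 : ∀ x, 0 ≤ G x ∧ G x ≤ 1 :=
    fun x => ⟨hGm.le_of_tendsto hG0 x, hGm.ge_of_tendsto hG1 x⟩
  have hbdda : BddAbove (range δ) := by
    refine ⟨1, ?_⟩
    rintro _ ⟨x, rfl⟩
    rw [hδx]; linarith [(hF01 x).2, (hG01 x).1]
  have hbddb : BddBelow (range δ) := by
    refine ⟨-1, ?_⟩
    rintro _ ⟨x, rfl⟩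
    rw [hδx]; linarith [(hF01 x).1, (hG01 x).2]
  set M : ℝ := ⨆ x, δ x with hM
  set m : ℝ := ⨅ x, δ x with hm
  have hxM : ∀ x, δ x ≤ M := fun x => le_ciSup hbdda x
  have hmx : ∀ x, m ≤ δ x := fun x => ciInf_le hbddb x
  have hM0 : 0 ≤ M := le_of_tendsto' hδbot hxM
  have h0m : m ≤ 0 := ge_of_tendsto' hδbot hmx
  have hub : ∀ s ∈ {s | ∃ v₁ v₂ : ℝ, v₁ ≤ v₂ ∧
      s = |F v₁ - G v₁| + |(F v₂ - G v₂) - (F v₁ - G v₁)| + |F v₂ - G v₂|},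
      s ≤ 2 * (M - m) := by
    rintro s ⟨v₁, v₂, -, rfl⟩
    have ha1 : m ≤ F v₁ - G v₁ := hmx v₁
    have ha2 : F v₁ - G v₁ ≤ M := hxM v₁
    have hb1 : m ≤ F v₂ - G v₂ := hmx v₂
    have hb2 : F v₂ - G v₂ ≤ M := hxM v₂
    rcases abs_cases (F v₁ - G v₁) with ⟨e1, _⟩ | ⟨e1, _⟩ <;>
    rcases abs_cases (F v₂ - G v₂) with ⟨e2, _⟩ | ⟨e2, _⟩ <;>
    rcases abs_cases ((F v₂ - G v₂) - (F v₁ - G v₁)) with ⟨e3, _⟩ | ⟨e3, _⟩ <;>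
    rw [e1, e2, e3] <;> linarith
  have hne : ({s | ∃ v₁ v₂ : ℝ, v₁ ≤ v₂ ∧
      s = |F v₁ - G v₁| + |(F v₂ - G v₂) - (F v₁ - G v₁)| + |F v₂ - G v₂|} : Set ℝ).Nonempty :=
    ⟨_, 0, 0, le_refl 0, rfl⟩
  have hbddS : BddAbove {s | ∃ v₁ v₂ : ℝ, v₁ ≤ v₂ ∧
      s = |F v₁ - G v₁| + |(F v₂ - G v₂) - (F v₁ - G v₁)| + |F v₂ - G v₂|} :=
    ⟨2 * (M - m), hub⟩
  refine le_antisymm (csSup_le hne hub) ?_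
  refine le_of_forall_pos_le_add fun ε hε => ?_
  obtain ⟨x₁, hx₁⟩ := exists_lt_of_lt_ciSup (show M - ε / 4 < M by linarith)
  obtain ⟨x₂, hx₂⟩ := exists_lt_of_ciInf_lt (show m + ε / 4 > m by linarith)
  rcases le_total x₁ x₂ with h | h
  · have hmem : |F x₁ - G x₁| + |(F x₂ - G x₂) - (F x₁ - G x₁)| + |F x₂ - G x₂| ∈
        {s | ∃ v₁ v₂ : ℝ, v₁ ≤ v₂ ∧
          s = |F v₁ - G v₁| + |(F v₂ - G v₂) - (F v₁ - G v₁)| + |F v₂ - G v₂|} :=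
      ⟨x₁, x₂, h, rfl⟩
    have hle := le_csSup hbddS hmem
    have h1 : F x₁ - G x₁ ≤ |F x₁ - G x₁| := le_abs_self _
    have h2 : -(F x₂ - G x₂) ≤ |F x₂ - G x₂| := neg_le_abs _
    have h3 : (F x₁ - G x₁) - (F x₂ - G x₂) ≤ |(F x₂ - G x₂) - (F x₁ - G x₁)| := by
      rw [abs_sub_comm]; exact le_abs_self _
    have e1 := hδx x₁; have e2 := hδx x₂
    linarith
  · have hmem : |F x₂ - G x₂| + |(F x₁ - G x₁) - (F x₂ - G x₂)| + |F x₁ - G x₁| ∈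
        {s | ∃ v₁ v₂ : ℝ, v₁ ≤ v₂ ∧
          s = |F v₁ - G v₁| + |(F v₂ - G v₂) - (F v₁ - G v₁)| + |F v₂ - G v₂|} :=
      ⟨x₂, x₁, h, rfl⟩
    have hle := le_csSup hbddS hmem
    have h1 : F x₁ - G x₁ ≤ |F x₁ - G x₁| := le_abs_self _
    have h2 : -(F x₂ - G x₂) ≤ |F x₂ - G x₂| := neg_le_abs _
    have h3 : (F x₁ - G x₁) - (F x₂ - G x₂) ≤ |(F x₁ - G x₁) - (F x₂ - G x₂)| :=
      le_abs_self _
    have e1 := hδx x₁; have e2 := hδx x₂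
    linarith
end
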